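/- arXiv:1301.1140 — 4 statements merged into one kernel-verified Lean document; each statement's English description precedes it below -/
import Mathlib

section
/- Let V be a real vector space, Y ⊆ X ⊆ V, and 𝔸 a nonzero additive subgroup of (ℝ,+). Then Y is a positive weak 𝔸-face of X if and only if the following three conditions all hold: (i) Y is a weak 𝔸-face of X; (ii) Y is a weak 𝔸-face of X ∪ {0}; and (iii) there is no nonzero f ∈ Fin(Y,𝔸₊) with ℓ⃗(f) = 0, i.e., 0 is not a nontrivial 𝔸₊-linear combination of elements of Y. -/
open Finsupp

/-- `R₊ := R ∩ [0,∞)`. -/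
def Rplus (R : Set ℝ) : Set ℝ := R ∩ Set.Ici 0

/-- `ℓ(f) := Σ_v f(v)`. -/
noncomputable def ell {V : Type*} [AddCommGroup V] [Module ℝ V] (f : V →₀ ℝ) : ℝ :=
  f.sum fun _ r => r

/-- `ℓ⃗(f) := Σ_v f(v) • v`. -/
noncomputable def vell {V : Type*} [AddCommGroup V] [Module ℝ V] (f : V →₀ ℝ) : V :=
  f.sum fun v r => r • v

/-- `f ∈ Fin(X,R)`: finitely supported, support in `X`, values in `R ∪ {0}`. -/
def IsFinSupp {V : Type*} [AddCommGroup V] [Module ℝ V] (X : Set V) (R : Set ℝ)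
    (f : V →₀ ℝ) : Prop :=
  ↑f.support ⊆ X ∧ ∀ v, f v ∈ R ∪ {0}

/-- `Y` is a weak `R`-face of `X`. -/
def IsWeakFace {V : Type*} [AddCommGroup V] [Module ℝ V] (X Y : Set V) (R : Set ℝ) : Prop :=
  ∀ f g : V →₀ ℝ, IsFinSupp X (Rplus R) f → IsFinSupp Y (Rplus R) g →
    ell f = ell g → 0 < ell g → vell f = vell g → ↑f.support ⊆ Y

/-- `Y` is a positive weak `R`-face of `X`. -/
def IsPosWeakFace {V : Type*} [AddCommGroup V] [Module ℝ V] (X Y : Set V) (R : Set ℝ) : Prop :=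
  ∀ f g : V →₀ ℝ, IsFinSupp X (Rplus R) f → IsFinSupp Y (Rplus R) g →
    vell f = vell g → ell g ≤ ell f ∧ (ell g = ell f ↔ ↑f.support ⊆ Y)

/-- `Y` is `(R',R)`-closed in `X`. -/
def IsRClosed {V : Type*} [AddCommGroup V] [Module ℝ V] (X Y : Set V) (R' R : Set ℝ) : Prop :=
  ∀ f g : V →₀ ℝ, IsFinSupp X R f → IsFinSupp Y R g →
    ell f = ell g → ell f ∈ R' → ell f ≠ 0 → vell f = vell g → ↑f.support ⊆ Y

/-- The maximizer set `X(φ)`. -/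
def maximizer {V : Type*} [AddCommGroup V] [Module ℝ V] (X : Set V) (φ : V →ₗ[ℝ] ℝ) : Set V :=
  {x | x ∈ X ∧ ∀ x' ∈ X, φ x' ≤ φ x}

/-! Adding or removing mass at the vector `0` changes `ℓ` but not `ℓ⃗`. So if the inequality
`ℓ g ≤ ℓ f` failed, the deficit could be filled by mass at `0`, which (ii) forces into `Y`; a
positive element of `𝔸` placed at `0 ∈ Y` then contradicts (iii). Given the inequality, its
equality case is (i). Conversely, a positive weak face loses nothing by discarding mass at `0`,
which gives (ii), and comparing with the empty combination gives (iii). -/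

section LinearCombination

variable {V : Type*} [AddCommGroup V] [Module ℝ V]

lemma ell_add (f g : V →₀ ℝ) : ell (f + g) = ell f + ell g :=
  sum_add_index' (fun _ => rfl) (fun _ _ _ => rfl)

lemma vell_add (f g : V →₀ ℝ) : vell (f + g) = vell f + vell g :=
  sum_add_index' (fun v => zero_smul ℝ v) (fun v r s => add_smul r s v)

lemma ell_single (v : V) (r : ℝ) : ell (single v r) = r :=
  sum_single_index rfl

lemma vell_single (v : V) (r : ℝ) : vell (single v r) = r • v :=
  sum_single_index (zero_smul ℝ v)

lemma ell_zero : ell (0 : V →₀ ℝ) = 0 := sum_zero_index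

lemma vell_zero : vell (0 : V →₀ ℝ) = 0 := sum_zero_index

lemma ell_erase_add (f : V →₀ ℝ) (v : V) : ell (f.erase v) + f v = ell f := by
  rw [← ell_single v (f v), ← ell_add, erase_add_single]

lemma vell_erase_zero (f : V →₀ ℝ) : vell (f.erase 0) = vell f := by
  conv_rhs => rw [← erase_add_single 0 f]
  rw [vell_add, vell_single, smul_zero, add_zero]

end LinearCombination

section FinSupp

variable {V : Type*} [AddCommGroup V] [Module ℝ V] {X X' : Set V} {R : Set ℝ} {f : V →₀ ℝ}

lemma isFinSupp_zero : IsFinSupp X R (0 : V →₀ ℝ) :=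
  ⟨by simp, fun _ => Or.inr rfl⟩

lemma IsFinSupp.mono (hf : IsFinSupp X R f) (hXX' : X ⊆ X') : IsFinSupp X' R f :=
  ⟨hf.1.trans hXX', hf.2⟩

lemma isFinSupp_single {v : V} {a : ℝ} (hv : v ∈ X) (ha : a ∈ R) :
    IsFinSupp X R (single v a) := by
  classical
  refine ⟨fun w hw => ?_, fun w => ?_⟩
  · rwa [Finset.mem_singleton.mp (support_single_subset hw)]
  · rw [single_apply]
    split_ifs
    exacts [Or.inl ha, Or.inr rfl]

lemma IsFinSupp.erase_zero (hf : IsFinSupp (X ∪ {0}) R f) : IsFinSupp X R (f.erase 0) := by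
  classical
  refine ⟨fun v hv => ?_, fun v => ?_⟩
  · rw [support_erase, Finset.coe_erase] at hv
    exact (hf.1 hv.1).resolve_right hv.2
  · rw [erase_apply]
    split_ifs
    exacts [Or.inr rfl, hf.2 v]

lemma IsFinSupp.apply_nonneg (hf : IsFinSupp X (Rplus R) f) (v : V) : 0 ≤ f v := by
  rcases hf.2 v with h | h
  exacts [h.2, h.symm ▸ le_rfl]

lemma IsFinSupp.ell_nonneg (hf : IsFinSupp X (Rplus R) f) : 0 ≤ ell f :=
  Finset.sum_nonneg fun v _ => hf.apply_nonneg v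

lemma IsFinSupp.ell_pos (hf : IsFinSupp X (Rplus R) f) (hf0 : f ≠ 0) : 0 < ell f := by
  obtain ⟨v, hv⟩ := Finsupp.ne_iff.mp hf0
  exact Finset.sum_pos' (fun w _ => hf.apply_nonneg w)
    ⟨v, mem_support_iff.mpr hv, (hf.apply_nonneg v).lt_of_ne (Ne.symm hv)⟩

lemma IsFinSupp.eq_zero_of_ell_eq_zero (hf : IsFinSupp X (Rplus R) f) (h : ell f = 0) :
    f = 0 := by
  by_contra hf0
  exact (hf.ell_pos hf0).ne' h

end FinSupp

section Subgroup

variable {V : Type*} [AddCommGroup V] [Module ℝ V] {X X' : Set V} {𝔸 : AddSubgroup ℝ}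
  {f g : V →₀ ℝ}

lemma mem_rplus_union_zero_iff {x : ℝ} : x ∈ Rplus (𝔸 : Set ℝ) ∪ {0} ↔ x ∈ 𝔸 ∧ 0 ≤ x := by
  constructor
  · rintro (h | rfl)
    exacts [h, ⟨zero_mem 𝔸, le_rfl⟩]
  · exact fun h => Or.inl h

lemma IsFinSupp.ell_mem (hf : IsFinSupp X (Rplus (𝔸 : Set ℝ)) f) : ell f ∈ 𝔸 :=
  AddSubgroup.sum_mem 𝔸 fun v _ => (mem_rplus_union_zero_iff.mp (hf.2 v)).1

lemma IsFinSupp.add (hf : IsFinSupp X (Rplus (𝔸 : Set ℝ)) f)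
    (hg : IsFinSupp X' (Rplus (𝔸 : Set ℝ)) g) :
    IsFinSupp (X ∪ X') (Rplus (𝔸 : Set ℝ)) (f + g) := by
  classical
  refine ⟨fun v hv => ?_, fun v => ?_⟩
  · rcases Finset.mem_union.mp (support_add (Finset.mem_coe.mp hv)) with h | h
    exacts [Or.inl (hf.1 h), Or.inr (hg.1 h)]
  · obtain ⟨hfA, hf0⟩ := mem_rplus_union_zero_iff.mp (hf.2 v)
    obtain ⟨hgA, hg0⟩ := mem_rplus_union_zero_iff.mp (hg.2 v)
    exact mem_rplus_union_zero_iff.mpr ⟨𝔸.add_mem hfA hgA, add_nonneg hf0 hg0⟩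

lemma AddSubgroup.exists_pos_mem_of_ne_bot (h𝔸 : 𝔸 ≠ ⊥) : ∃ a ∈ 𝔸, 0 < a := by
  obtain ⟨⟨a, ha⟩, ha0⟩ := AddSubgroup.ne_bot_iff_exists_ne_zero.mp h𝔸
  rcases lt_or_gt_of_ne (Subtype.coe_ne_coe.mpr ha0 : a ≠ 0) with hneg | hpos
  exacts [⟨-a, 𝔸.neg_mem ha, neg_pos.mpr hneg⟩, ⟨a, ha, hpos⟩]

end Subgroup

section Faces

variable {V : Type*} [AddCommGroup V] [Module ℝ V] {X Y : Set V}

lemma IsPosWeakFace.isWeakFace {R : Set ℝ} (h : IsPosWeakFace X Y R) : IsWeakFace X Y R :=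
  fun f g hf hg hl _ hv => ((h f g hf hg hv).2).mp hl.symm

lemma IsPosWeakFace.isWeakFace_union_zero {R : Set ℝ} (h : IsPosWeakFace X Y R) :
    IsWeakFace (X ∪ {0}) Y R := by
  intro f g hf hg hl _ hv
  have key := h (f.erase 0) g hf.erase_zero hg ((vell_erase_zero f).trans hv)
  have hsplit := ell_erase_add f 0
  have hf0 : f 0 = 0 := by linarith [key.1, hf.apply_nonneg 0]
  rw [erase_of_notMem_support (notMem_support_iff.mpr hf0)] at key
  exact key.2.mp (by linarith)

lemma IsPosWeakFace.not_exists_vell_eq_zero {R : Set ℝ} (h : IsPosWeakFace X Y R) :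
    ¬∃ f : V →₀ ℝ, f ≠ 0 ∧ IsFinSupp Y (Rplus R) f ∧ vell f = 0 := by
  rintro ⟨f, hf0, hf, hv⟩
  have := (h 0 f isFinSupp_zero hf (vell_zero.trans hv.symm)).1
  rw [ell_zero] at this
  exact this.not_gt (hf.ell_pos hf0)

variable {𝔸 : AddSubgroup ℝ}

lemma zero_mem_of_isWeakFace_union_zero (h : IsWeakFace (X ∪ {0}) Y 𝔸) {f g : V →₀ ℝ}
    (hf : IsFinSupp X (Rplus (𝔸 : Set ℝ)) f) (hg : IsFinSupp Y (Rplus (𝔸 : Set ℝ)) g)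
    (hv : vell f = vell g) (hlt : ell f < ell g) : (0 : V) ∈ Y := by
  set c := ell g - ell f
  have hc : IsFinSupp {(0 : V)} (Rplus (𝔸 : Set ℝ)) (single 0 c) :=
    isFinSupp_single rfl ⟨𝔸.sub_mem hg.ell_mem hf.ell_mem, (sub_pos.mpr hlt).le⟩
  have hsub := h (f + single 0 c) g (hf.add hc) hg (by rw [ell_add, ell_single]; ring)
    (hf.ell_nonneg.trans_lt hlt) (by rw [vell_add, vell_single, smul_zero, add_zero, hv])
  apply hsub
  rw [Finset.mem_coe, mem_support_iff, Finsupp.add_apply, single_eq_same]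
  linarith [hf.apply_nonneg 0, sub_pos.mpr hlt]

lemma exists_vell_eq_zero_of_zero_mem (h𝔸 : 𝔸 ≠ ⊥) (h0 : (0 : V) ∈ Y) :
    ∃ f : V →₀ ℝ, f ≠ 0 ∧ IsFinSupp Y (Rplus (𝔸 : Set ℝ)) f ∧ vell f = 0 := by
  obtain ⟨a, haA, ha⟩ := AddSubgroup.exists_pos_mem_of_ne_bot h𝔸
  exact ⟨single 0 a, single_ne_zero.mpr ha.ne', isFinSupp_single h0 ⟨haA, ha.le⟩,
    by rw [vell_single, smul_zero]⟩

lemma ell_le_of_isWeakFace_union_zero (h𝔸 : 𝔸 ≠ ⊥) (h : IsWeakFace (X ∪ {0}) Y 𝔸)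
    (hY : ¬∃ f : V →₀ ℝ, f ≠ 0 ∧ IsFinSupp Y (Rplus (𝔸 : Set ℝ)) f ∧ vell f = 0)
    {f g : V →₀ ℝ} (hf : IsFinSupp X (Rplus (𝔸 : Set ℝ)) f)
    (hg : IsFinSupp Y (Rplus (𝔸 : Set ℝ)) g) (hv : vell f = vell g) : ell g ≤ ell f :=
  le_of_not_gt fun hlt =>
    hY (exists_vell_eq_zero_of_zero_mem h𝔸 (zero_mem_of_isWeakFace_union_zero h hf hg hv hlt))

lemma isPosWeakFace_of_isWeakFace (hYX : Y ⊆ X) (h𝔸 : 𝔸 ≠ ⊥) (h : IsWeakFace X Y 𝔸)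
    (h₀ : IsWeakFace (X ∪ {0}) Y 𝔸)
    (hY : ¬∃ f : V →₀ ℝ, f ≠ 0 ∧ IsFinSupp Y (Rplus (𝔸 : Set ℝ)) f ∧ vell f = 0) :
    IsPosWeakFace X Y 𝔸 := by
  intro f g hf hg hv
  have hle := ell_le_of_isWeakFace_union_zero h𝔸 h₀ hY hf hg hv
  refine ⟨hle, fun heq => ?_, fun hfY => ?_⟩
  · rcases hg.ell_nonneg.lt_or_eq with hpos | hzero
    · exact h f g hf hg heq.symm hpos hv
    · simp [hf.eq_zero_of_ell_eq_zero (heq ▸ hzero.symm)]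
  · exact le_antisymm hle
      (ell_le_of_isWeakFace_union_zero h𝔸 h₀ hY (hg.mono hYX) ⟨hfY, hf.2⟩ hv.symm)

end Faces

/-- `Y` is a positive weak `𝔸`-face of `X` iff (i) `Y` is a weak `𝔸`-face
of `X`; (ii) `Y` is a weak `𝔸`-face of `X ∪ {0}`; and (iii) `0` is not a nontrivial
`𝔸₊`-linear combination of elements of `Y`. -/
theorem statement8 {V : Type*} [AddCommGroup V] [Module ℝ V]
    (X Y : Set V) (hYX : Y ⊆ X) (𝔸 : AddSubgroup ℝ) (h𝔸 : 𝔸 ≠ ⊥) :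
    IsPosWeakFace X Y (𝔸 : Set ℝ) ↔
      IsWeakFace X Y (𝔸 : Set ℝ) ∧ IsWeakFace (X ∪ {0}) Y (𝔸 : Set ℝ) ∧
        ¬∃ f : V →₀ ℝ, f ≠ 0 ∧ IsFinSupp Y (Rplus (𝔸 : Set ℝ)) f ∧ vell f = 0 :=
  ⟨fun h => ⟨h.isWeakFace, h.isWeakFace_union_zero, h.not_exists_vell_eq_zero⟩,
    fun ⟨h, h₀, hY⟩ => isPosWeakFace_of_isWeakFace hYX h𝔸 h h₀ hY⟩
end

section
/- Let V be a real vector space, Y ⊆ X ⊆ V, and 𝔸 a nonzero additive subgroup of (ℝ,+). If Y is a weak 𝔸-face of X, then Y is a weak ℤ-face of X, and consequently also a weak ℚ-face of X. -/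
open Finsupp

lemma ell_smul {V : Type*} [AddCommGroup V] [Module ℝ V] (c : ℝ) (f : V →₀ ℝ) :
    ell (c • f) = c * ell f := by
  unfold ell
  rw [Finsupp.sum_smul_index (fun _ => rfl), Finsupp.mul_sum]

lemma vell_smul {V : Type*} [AddCommGroup V] [Module ℝ V] (c : ℝ) (f : V →₀ ℝ) :
    vell (c • f) = c • vell f := by
  unfold vell
  rw [Finsupp.sum_smul_index (fun v => zero_smul ℝ v), Finsupp.smul_sum]
  simp [mul_smul]

lemma face_of_scale {V : Type*} [AddCommGroup V] [Module ℝ V] (X Y : Set V) (R R' : Set ℝ)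
    (h : ∀ f g : V →₀ ℝ, IsFinSupp X (Rplus R') f → IsFinSupp Y (Rplus R') g →
      ∃ c : ℝ, 0 < c ∧ IsFinSupp X (Rplus R) (c • f) ∧ IsFinSupp Y (Rplus R) (c • g))
    (hface : IsWeakFace X Y R) : IsWeakFace X Y R' := by
  intro f g hf hg hl hpos hv
  obtain ⟨c, hc, hcf, hcg⟩ := h f g hf hg
  have hsupp : (c • f).support = f.support := Finsupp.support_smul_eq hc.ne'
  have := hface (c • f) (c • g) hcf hcg
    (by rw [ell_smul, ell_smul, hl])
    (by rw [ell_smul]; positivity)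
    (by rw [vell_smul, vell_smul, hv])
  rwa [hsupp] at this

lemma intcast_dvd_mul {N : ℕ} {q : ℚ} (hd : q.den ∣ N) :
    ∃ n : ℤ, (N : ℚ) * q = (n : ℚ) := by
  obtain ⟨k, hk⟩ := hd
  refine ⟨k * q.num, ?_⟩
  have : (N : ℚ) = (q.den : ℚ) * k := by exact_mod_cast hk
  rw [this]
  push_cast
  rw [mul_comm (q.den : ℚ) (k : ℚ), mul_assoc, mul_comm (q.den : ℚ) q,
    Rat.mul_den_eq_num]

/-- If `Y` is a weak `𝔸`-face of `X` for a nonzero additive subgroup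
`𝔸 ⊆ ℝ`, then `Y` is a weak `ℤ`-face of `X`, and also a weak `ℚ`-face of `X`. -/
theorem statement10 {V : Type*} [AddCommGroup V] [Module ℝ V]
    (X Y : Set V) (hYX : Y ⊆ X) (𝔸 : AddSubgroup ℝ) (h𝔸 : 𝔸 ≠ ⊥)
    (hface : IsWeakFace X Y (𝔸 : Set ℝ)) :
    IsWeakFace X Y (Set.range ((↑) : ℤ → ℝ)) ∧
      IsWeakFace X Y (Set.range ((↑) : ℚ → ℝ)) := by
  -- a positive element of 𝔸
  obtain ⟨⟨a, ha⟩, hane⟩ := AddSubgroup.ne_bot_iff_exists_ne_zero.mp h𝔸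
  have hane' : a ≠ 0 := by simpa using hane
  obtain ⟨b, hb, hbpos⟩ : ∃ b : ℝ, b ∈ 𝔸 ∧ 0 < b := by
    rcases lt_or_gt_of_ne hane' with h | h
    · exact ⟨-a, 𝔸.neg_mem ha, by linarith⟩
    · exact ⟨a, ha, h⟩
  -- ℤ-face
  have hZ : IsWeakFace X Y (Set.range ((↑) : ℤ → ℝ)) := by
    apply face_of_scale X Y (𝔸 : Set ℝ) _ _ hface
    intro f g hf hg
    refine ⟨b, hbpos, ?_⟩
    have mk : ∀ (Z : Set V) (h : V →₀ ℝ), IsFinSupp Z (Rplus (Set.range ((↑) : ℤ → ℝ))) h →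
        IsFinSupp Z (Rplus (𝔸 : Set ℝ)) (b • h) := by
      rintro Z h ⟨hs, hvals⟩
      refine ⟨by rwa [Finsupp.support_smul_eq hbpos.ne'], fun v => ?_⟩
      rcases hvals v with ⟨⟨n, hn⟩, hnn⟩ | h0
      · left
        refine ⟨?_, ?_⟩
        · simp only [Finsupp.smul_apply, smul_eq_mul, ← hn]
          have : b * (n : ℝ) = n • b := by
            rw [zsmul_eq_mul, mul_comm]
          rw [this]
          exact 𝔸.zsmul_mem hb n
        · simp only [Finsupp.smul_apply, smul_eq_mul, Set.mem_Ici]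
          exact mul_nonneg hbpos.le hnn
      · right; simp [Set.mem_singleton_iff.mp h0]
    exact ⟨mk X f hf, mk Y g hg⟩
  refine ⟨hZ, ?_⟩
  -- ℚ-face from ℤ-face by clearing denominators
  apply face_of_scale X Y (Set.range ((↑) : ℤ → ℝ)) _ _ hZ
  intro f g hf hg
  -- choose rational representatives
  have hq : ∀ (h : V →₀ ℝ), IsFinSupp Y (Rplus (Set.range ((↑) : ℚ → ℝ))) h ∨
      IsFinSupp X (Rplus (Set.range ((↑) : ℚ → ℝ))) h → ∀ v, ∃ q : ℚ, (q : ℝ) = h v := by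
    rintro h (⟨_, hv⟩ | ⟨_, hv⟩) v <;>
    · rcases hv v with ⟨⟨q, hq⟩, _⟩ | h0
      · exact ⟨q, hq⟩
      · exact ⟨0, by simp [Set.mem_singleton_iff.mp h0]⟩
  choose qf hqf using hq f (Or.inr hf)
  choose qg hqg using hq g (Or.inl hg)
  set N : ℕ := (∏ v ∈ f.support, (qf v).den) * ∏ v ∈ g.support, (qg v).den with hN
  have hNpos : 0 < N := by
    apply Nat.mul_pos <;> exact Finset.prod_pos (fun v _ => (Rat.den_pos _))
  refine ⟨(N : ℝ), by exact_mod_cast hNpos, ?_⟩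
  have mk : ∀ (Z : Set V) (h : V →₀ ℝ) (qh : V → ℚ), (∀ v, (qh v : ℝ) = h v) →
      (∀ v ∈ h.support, (qh v).den ∣ N) →
      IsFinSupp Z (Rplus (Set.range ((↑) : ℚ → ℝ))) h →
      IsFinSupp Z (Rplus (Set.range ((↑) : ℤ → ℝ))) ((N : ℝ) • h) := by
    rintro Z h qh hqh hdvd ⟨hs, hvals⟩
    have hNne : (N : ℝ) ≠ 0 := by exact_mod_cast hNpos.ne'
    refine ⟨by rwa [Finsupp.support_smul_eq hNne], fun v => ?_⟩
    by_cases hv0 : h v = 0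
    · right; simp [hv0]
    · left
      have hvmem : v ∈ h.support := Finsupp.mem_support_iff.mpr hv0
      obtain ⟨n, hn⟩ := intcast_dvd_mul (hdvd v hvmem)
      have hnn : 0 ≤ h v := by
        rcases hvals v with ⟨_, hnn⟩ | h0
        · exact hnn
        · exact absurd (Set.mem_singleton_iff.mp h0) hv0
      constructor
      · refine ⟨n, ?_⟩
        simp only [Finsupp.smul_apply, smul_eq_mul, ← hqh v]
        have := congrArg (fun q : ℚ => (q : ℝ)) hn
        push_cast at this ⊢
        linarith
      · simp only [Finsupp.smul_apply, smul_eq_mul, Set.mem_Ici]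
        positivity
  refine ⟨mk X f qf hqf (fun v _ => Dvd.dvd.mul_right ?_ _) hf,
          mk Y g qg hqg (fun v hv => Dvd.dvd.mul_left ?_ _) hg⟩
  · exact Finset.dvd_prod_of_mem _ (by assumption)
  · exact Finset.dvd_prod_of_mem _ hv
end

section
/- Let V be a real vector space, Δ ⊆ V a finite linearly independent subset, λ ∈ V, and set X := λ − ℤ₊Δ. For a nonempty subset Y ⊆ X, the following are equivalent: (a) Y is ({2},{1,2})-closed in X, i.e., whenever y₁ + y₂ = x₁ + x₂ with y₁, y₂ ∈ Y and x₁, x₂ ∈ X (repetitions allowed), one has x₁, x₂ ∈ Y; (b) there exists a (necessarily unique) subset Δ' ⊆ Δ with Y = λ − ℤ₊Δ'. -/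
/-!
If `Y` is closed, then `y + y = λ + (λ - 2q)` for any `y = λ - q ∈ Y` puts `λ` in `Y`, and the
splitting `(λ - (a + b)) + λ = (λ - a) + (λ - b)` shows that `Y = λ - ℤ₊Δ'` for
`Δ' = {α ∈ Δ | λ - α ∈ Y}`. Conversely, `ℤ₊Δ'` is a face of `ℤ₊Δ`: a linear functional equal to
`0` on `Δ'` and to `1` on `Δ \ Δ'` (it exists by linear independence) is nonnegative on `ℤ₊Δ`
and vanishes there exactly on `ℤ₊Δ'`.
-/

open Finsupp

theorem LinearIndepOn.exists_linearMap_eqOn {K V W : Type*} [Field K] [AddCommGroup V]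
    [Module K V] [AddCommGroup W] [Module K W] {s : Set V} (hs : LinearIndepOn K id s)
    (g : V → W) : ∃ φ : V →ₗ[K] W, Set.EqOn φ g s := by
  let b := Module.Basis.extend hs
  refine ⟨b.constr K fun i => g i, fun x hx => ?_⟩
  have hbx : b ⟨x, Module.Basis.subset_extend hs hx⟩ = x := Module.Basis.extend_apply_self hs _
  rw [← hbx, b.constr_basis, hbx]

namespace AddSubmonoid

variable {M N : Type*} [AddCommMonoid M] [AddCommMonoid N] [PartialOrder N]
  [IsOrderedAddMonoid N] {S T : Set M} (φ : M →+ N)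

theorem map_nonneg_of_mem_closure (hS : ∀ s ∈ S, 0 ≤ φ s) {a : M} (ha : a ∈ closure S) :
    0 ≤ φ a := by
  induction ha using closure_induction with
  | mem s hs => exact hS s hs
  | zero => simp
  | add a b _ _ iha ihb => simpa using add_nonneg iha ihb

theorem mem_closure_of_map_eq_zero (hS : ∀ s ∈ S, 0 ≤ φ s) (hT : ∀ s ∈ S, φ s = 0 → s ∈ T)
    {a : M} (ha : a ∈ closure S) (h0 : φ a = 0) : a ∈ closure T := by
  induction ha using closure_induction with
  | mem s hs => exact subset_closure (hT s hs h0)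
  | zero => exact zero_mem _
  | add a b ha hb iha ihb =>
    rw [map_add] at h0
    obtain ⟨ha0, hb0⟩ :=
      (add_eq_zero_iff_of_nonneg (map_nonneg_of_mem_closure φ hS ha)
        (map_nonneg_of_mem_closure φ hS hb)).mp h0
    exact add_mem (iha ha0) (ihb hb0)

end AddSubmonoid

open AddSubmonoid

theorem mem_closure_of_add_mem_closure_of_linearIndepOn {K V : Type*} [Field K]
    [LinearOrder K] [IsStrictOrderedRing K] [AddCommGroup V] [Module K V] {Δ Δ' : Set V}
    (hind : LinearIndepOn K id Δ) (hsub : Δ' ⊆ Δ) {a b : V} (ha : a ∈ closure Δ)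
    (hb : b ∈ closure Δ) (hab : a + b ∈ closure Δ') : a ∈ closure Δ' := by
  classical
  obtain ⟨φ, hφ⟩ := hind.exists_linearMap_eqOn fun x => if x ∈ Δ' then (0 : K) else 1
  have hφ_nonneg : ∀ s ∈ Δ, 0 ≤ φ.toAddMonoidHom s := fun s hs => by
    simp only [LinearMap.toAddMonoidHom_coe, hφ hs]
    split_ifs <;> norm_num
  have hφ_zero : ∀ s ∈ Δ, φ.toAddMonoidHom s = 0 → s ∈ Δ' := fun s hs h => by
    simp only [LinearMap.toAddMonoidHom_coe, hφ hs] at h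
    split_ifs at h with hs'
    exacts [hs', absurd h one_ne_zero]
  have hab0 : φ.toAddMonoidHom (a + b) = 0 := by
    refine (closure_le (S := AddMonoidHom.mker _) |>.mpr fun s hs => ?_) hab
    simp [AddMonoidHom.mem_mker, hφ (hsub hs), hs]
  rw [map_add] at hab0
  exact mem_closure_of_map_eq_zero _ hφ_nonneg hφ_zero ha
    ((add_eq_zero_iff_of_nonneg (map_nonneg_of_mem_closure _ hφ_nonneg ha)
      (map_nonneg_of_mem_closure _ hφ_nonneg hb)).mp hab0).1

section Weights

variable {V : Type*} [AddCommGroup V]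

def vermaWeights (lam : V) (Δ : Set V) : Set V :=
  {x : V | ∃ q ∈ closure Δ, x = lam - q}

theorem sub_mem_vermaWeights {lam q : V} {Δ : Set V} (hq : q ∈ closure Δ) :
    lam - q ∈ vermaWeights lam Δ :=
  ⟨q, hq, rfl⟩

theorem self_mem_vermaWeights (lam : V) (Δ : Set V) : lam ∈ vermaWeights lam Δ :=
  ⟨0, zero_mem _, (sub_zero lam).symm⟩

def IsPairClosed (X Y : Set V) : Prop :=
  ∀ y₁ ∈ Y, ∀ y₂ ∈ Y, ∀ x₁ ∈ X, ∀ x₂ ∈ X, y₁ + y₂ = x₁ + x₂ → x₁ ∈ Y ∧ x₂ ∈ Y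

theorem isPairClosed_vermaWeights {K : Type*} [Field K] [LinearOrder K] [IsStrictOrderedRing K]
    [Module K V] {Δ Δ' : Set V} (hind : LinearIndepOn K id Δ) (hsub : Δ' ⊆ Δ) (lam : V) :
    IsPairClosed (vermaWeights lam Δ) (vermaWeights lam Δ') := by
  rintro _ ⟨q₁, hq₁, rfl⟩ _ ⟨q₂, hq₂, rfl⟩ _ ⟨p₁, hp₁, rfl⟩ _ ⟨p₂, hp₂, rfl⟩ heq
  have hpq : p₁ + p₂ = q₁ + q₂ := by
    linear_combination (norm := abel_nf) heq
  have hsum : p₁ + p₂ ∈ closure Δ' := hpq ▸ add_mem hq₁ hq₂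
  refine ⟨sub_mem_vermaWeights ?_, sub_mem_vermaWeights ?_⟩
  · exact mem_closure_of_add_mem_closure_of_linearIndepOn hind hsub hp₁ hp₂ hsum
  · rw [add_comm] at hsum
    exact mem_closure_of_add_mem_closure_of_linearIndepOn hind hsub hp₂ hp₁ hsum

theorem eq_vermaWeights_of_isPairClosed {Δ Y : Set V} {lam : V}
    (hY : Y ⊆ vermaWeights lam Δ) (hne : Y.Nonempty) (hcl : IsPairClosed (vermaWeights lam Δ) Y) :
    Y = vermaWeights lam {α ∈ Δ | lam - α ∈ Y} := by
  have hlam : lam ∈ Y := by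
    obtain ⟨y, hy⟩ := hne
    obtain ⟨q, hq, rfl⟩ := hY hy
    refine (hcl _ hy _ hy lam (self_mem_vermaWeights lam Δ) _
      (sub_mem_vermaWeights (add_mem hq hq)) ?_).1
    abel
  ext x
  constructor
  · intro hx
    obtain ⟨q, hq, rfl⟩ := hY hx
    refine ⟨q, ?_, rfl⟩
    induction hq using closure_induction with
    | mem α hα => exact subset_closure ⟨hα, hx⟩
    | zero => exact zero_mem _
    | add a b ha hb iha ihb =>
      obtain ⟨ha', hb'⟩ := hcl _ hx lam hlam _ (sub_mem_vermaWeights ha) _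
        (sub_mem_vermaWeights hb) (by abel)
      exact add_mem (iha ha') (ihb hb')
  · rintro ⟨q, hq, rfl⟩
    induction hq using closure_induction with
    | mem α hα => exact hα.2
    | zero => simpa using hlam
    | add a b ha hb iha ihb =>
      have hab : a + b ∈ closure Δ := closure_mono (Set.sep_subset _ _) (add_mem ha hb)
      exact (hcl _ iha _ ihb lam (self_mem_vermaWeights lam Δ) _ (sub_mem_vermaWeights hab)
        (by abel)).2

end Weights

theorem statement15_general {V : Type*} [AddCommGroup V] [Module ℝ V]
    (Δ : Set V)
    (hind : LinearIndependent ℝ (fun x : Δ => (x : V)))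
    (lam : V) (Y : Set V)
    (hY : Y ⊆ {x : V | ∃ q ∈ AddSubmonoid.closure Δ, x = lam - q})
    (hne : Y.Nonempty) :
    (∀ y₁ ∈ Y, ∀ y₂ ∈ Y,
      ∀ x₁ ∈ {x : V | ∃ q ∈ AddSubmonoid.closure Δ, x = lam - q},
      ∀ x₂ ∈ {x : V | ∃ q ∈ AddSubmonoid.closure Δ, x = lam - q},
        y₁ + y₂ = x₁ + x₂ → x₁ ∈ Y ∧ x₂ ∈ Y) ↔
    (∃ Δ' ⊆ Δ, Y = {x : V | ∃ q ∈ AddSubmonoid.closure Δ', x = lam - q}) := by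
  constructor
  · intro hcl
    exact ⟨_, Set.sep_subset _ _, eq_vermaWeights_of_isPairClosed hY hne hcl⟩
  · rintro ⟨Δ', hsub, rfl⟩
    exact isPairClosed_vermaWeights hind hsub lam

/-- For `X := λ − ℤ₊Δ` (the set of weights of the Verma module `M(λ)`)
and a nonempty `Y ⊆ X`, `Y` is `({2},{1,2})`-closed in `X` iff `Y = λ − ℤ₊Δ'` for
some subset `Δ' ⊆ Δ`. -/
theorem statement15 {V : Type*} [AddCommGroup V] [Module ℝ V]
    (Δ : Set V) (hfin : Δ.Finite)
    (hind : LinearIndependent ℝ (fun x : Δ => (x : V)))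
    (lam : V) (Y : Set V)
    (hY : Y ⊆ {x : V | ∃ q ∈ AddSubmonoid.closure Δ, x = lam - q})
    (hne : Y.Nonempty) :
    (∀ y₁ ∈ Y, ∀ y₂ ∈ Y,
      ∀ x₁ ∈ {x : V | ∃ q ∈ AddSubmonoid.closure Δ, x = lam - q},
      ∀ x₂ ∈ {x : V | ∃ q ∈ AddSubmonoid.closure Δ, x = lam - q},
        y₁ + y₂ = x₁ + x₂ → x₁ ∈ Y ∧ x₂ ∈ Y) ↔
    (∃ Δ' ⊆ Δ, Y = {x : V | ∃ q ∈ AddSubmonoid.closure Δ', x = lam - q}) :=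
  statement15_general Δ hind lam Y hY hne
end

section
/- Let V be a real vector space, Δ ⊆ V a finite linearly independent subset, 𝔸 a nonzero additive subgroup of (ℝ,+), and J ⊆ Δ. Suppose λ = Σ_{α∈Δ} c_α α with all c_α ∈ 𝔸, and suppose there exists α₀ ∈ Δ ∖ J with c_{α₀} > 0. Then for every subset X ⊆ λ − ℤ₊Δ, the set X ∩ (λ − ℤ₊J) is a positive weak 𝔸-face of X. -/
open Finsupp

/-!
Pick weights `w`, zero on `J` and positive on `Δ ∖ J`, with `∑ c_α w_α > 0` (make `w α₀` large),
and extend them to a linear functional `ψ`. Then `ψ ≤ ψ λ` on `λ − ℤ₊Δ`, with equality exactly on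
`λ − ℤ₊J`, and for nonnegative `f`, `g` with `ℓ⃗ f = ℓ⃗ g` and `g` supported on the level set,
`ℓ(g) ψ(λ) = ψ(ℓ⃗ g) = ψ(ℓ⃗ f) ≤ ℓ(f) ψ(λ)`, with equality iff `f` is supported on the level set too.
-/

theorem LinearIndepOn.exists_linearMap_eq {K V : Type*} [Field K] [AddCommGroup V]
    [Module K V] {s : Set V} (hs : LinearIndepOn K id s) (w : V → K) :
    ∃ ψ : V →ₗ[K] K, ∀ x ∈ s, ψ x = w x := by
  refine ⟨(Module.Basis.extend hs).constr K fun i => w i, fun x hx => ?_⟩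
  have hx' : x ∈ hs.extend (Set.subset_univ _) := hs.subset_extend _ hx
  simpa only [Module.Basis.extend_apply_self] using
    Module.Basis.constr_basis (Module.Basis.extend hs) K (fun i => w i) ⟨x, hx'⟩

namespace AddSubmonoid

variable {M N F : Type*} [AddCommMonoid M] [AddCommMonoid N] [PartialOrder N]
  [IsOrderedAddMonoid N] [FunLike F M N] [AddMonoidHomClass F M N] (ψ : F) {s : Set M}

theorem map_nonneg_of_mem_closure_s17 (hs : ∀ x ∈ s, 0 ≤ ψ x) {q : M}
    (hq : q ∈ AddSubmonoid.closure s) : 0 ≤ ψ q := by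
  induction hq using AddSubmonoid.closure_induction with
  | mem x hx => exact hs x hx
  | zero => simp
  | add x y _ _ hx hy => rw [map_add]; exact add_nonneg hx hy

theorem mem_closure_sep_of_map_eq_zero (hs : ∀ x ∈ s, 0 ≤ ψ x) {q : M}
    (hq : q ∈ AddSubmonoid.closure s) (hψq : ψ q = 0) :
    q ∈ AddSubmonoid.closure {x ∈ s | ψ x = 0} := by
  induction hq using AddSubmonoid.closure_induction with
  | mem x hx => exact AddSubmonoid.subset_closure ⟨hx, hψq⟩
  | zero => exact zero_mem _
  | add x y hx hy ihx ihy =>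
    rw [map_add] at hψq
    have := (add_eq_zero_iff_of_nonneg (map_nonneg_of_mem_closure_s17 ψ hs hx)
      (map_nonneg_of_mem_closure_s17 ψ hs hy)).1 hψq
    exact add_mem (ihx this.1) (ihy this.2)

end AddSubmonoid

section PositiveWeakFace

variable {V : Type*} [AddCommGroup V] [Module ℝ V]

theorem IsFinSupp.nonneg {X : Set V} {R : Set ℝ} {f : V →₀ ℝ} (hf : IsFinSupp X (Rplus R) f)
    (v : V) : 0 ≤ f v := by
  rcases hf.2 v with h | h
  · exact h.2
  · exact (Set.mem_singleton_iff.1 h).ge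

theorem ell_mul_sub_map_vell (ψ : V →ₗ[ℝ] ℝ) (m : ℝ) (f : V →₀ ℝ) :
    ell f * m - ψ (vell f) = ∑ v ∈ f.support, f v * (m - ψ v) := by
  simp [ell, vell, Finsupp.sum, Finset.sum_mul, mul_sub]

theorem isPosWeakFace_of_le_of_eq (ψ : V →ₗ[ℝ] ℝ) {m : ℝ} (hm : 0 < m) {X Y : Set V}
    (hX : ∀ x ∈ X, ψ x ≤ m) (hY : ∀ y ∈ Y, ψ y = m) (hXY : ∀ x ∈ X, ψ x = m → x ∈ Y)
    (R : Set ℝ) : IsPosWeakFace X Y R := by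
  intro f g hf hg hfg
  have hgap : (ell f - ell g) * m = ∑ v ∈ f.support, f v * (m - ψ v) := by
    have hg0 : ell g * m - ψ (vell g) = 0 := by
      rw [ell_mul_sub_map_vell]
      exact Finset.sum_eq_zero fun v hv => by rw [hY v (hg.1 hv), sub_self, mul_zero]
    rw [← ell_mul_sub_map_vell, hfg]
    linarith
  have hterm : ∀ v ∈ f.support, 0 ≤ f v * (m - ψ v) := fun v hv =>
    mul_nonneg (hf.nonneg v) (sub_nonneg.2 (hX v (hf.1 hv)))
  have hle : ell g ≤ ell f :=
    sub_nonneg.1 (nonneg_of_mul_nonneg_left (hgap ▸ Finset.sum_nonneg hterm) hm)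
  refine ⟨hle, ?_⟩
  calc ell g = ell f ↔ (ell f - ell g) * m = 0 := by
        rw [mul_eq_zero, sub_eq_zero, eq_comm]; simp [hm.ne']
    _ ↔ ∀ v ∈ f.support, f v * (m - ψ v) = 0 := by
        rw [hgap, Finset.sum_eq_zero_iff_of_nonneg hterm]
    _ ↔ ↑f.support ⊆ Y := by
        refine ⟨fun h v hv => hXY v (hf.1 hv) ?_, fun h v hv => ?_⟩
        · have := h v hv
          rw [mul_eq_zero, sub_eq_zero] at this
          exact (this.resolve_left (Finsupp.mem_support_iff.1 hv)).symm
        · rw [hY v (h hv), sub_self, mul_zero]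

end PositiveWeakFace

theorem exists_weight_eq_zero_on_pos_off {V : Type*} [DecidableEq V] (Δ J : Finset V) (c : V → ℝ) {α₀ : V}
    (hα₀Δ : α₀ ∈ Δ) (hα₀J : α₀ ∉ J) (hc0 : 0 < c α₀) :
    ∃ w : V → ℝ, (∀ α ∈ J, w α = 0) ∧ (∀ α ∉ J, 0 < w α) ∧ 0 < ∑ α ∈ Δ, c α * w α := by
  set S := ∑ α ∈ Δ, c α * if α ∈ J then 0 else 1
  set t := (|S| + 1) / c α₀
  have ht : 0 ≤ t := by positivity
  refine ⟨fun α => (if α ∈ J then 0 else 1) + if α = α₀ then t else 0, fun α hα => ?_,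
    fun α hα => ?_, ?_⟩
  · simp [hα, ne_of_mem_of_not_mem hα hα₀J]
  · simp only [hα, if_false]; split_ifs <;> linarith
  · have hsum : ∑ α ∈ Δ, c α * ((if α ∈ J then 0 else 1) + if α = α₀ then t else 0)
        = S + c α₀ * t := by
      simp [S, mul_add, Finset.sum_add_distrib, hα₀Δ]
    have hct : c α₀ * t = |S| + 1 := mul_div_cancel₀ _ hc0.ne'
    rw [hsum, hct]
    linarith [neg_abs_le S]

theorem statement17_general {V : Type*} [AddCommGroup V] [Module ℝ V]
    (Δ : Finset V)
    (hind : LinearIndependent ℝ (fun x : (Δ : Set V) => (x : V)))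
    (𝔸 : AddSubgroup ℝ)
    (J : Finset V) (hJ : J ⊆ Δ)
    (c : V → ℝ)
    (lam : V) (hlam : lam = ∑ α ∈ Δ, c α • α)
    (α₀ : V) (hα₀Δ : α₀ ∈ Δ) (hα₀J : α₀ ∉ J) (hc0 : 0 < c α₀)
    (X : Set V)
    (hX : X ⊆ {x : V | ∃ q ∈ AddSubmonoid.closure (Δ : Set V), x = lam - q}) :
    IsPosWeakFace X
      (X ∩ {x : V | ∃ q ∈ AddSubmonoid.closure (J : Set V), x = lam - q})
      (𝔸 : Set ℝ) := by
  classical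
  obtain ⟨w, hwJ, hwpos, hwlam⟩ := exists_weight_eq_zero_on_pos_off Δ J c hα₀Δ hα₀J hc0
  obtain ⟨ψ, hψ⟩ := (show LinearIndepOn ℝ id (Δ : Set V) from hind).exists_linearMap_eq w
  have hψΔ : ∀ α ∈ (Δ : Set V), 0 ≤ ψ α := fun α hα => by
    rw [hψ α hα]
    by_cases hαJ : α ∈ J
    · exact (hwJ α hαJ).ge
    · exact (hwpos α hαJ).le
  have hψJ : ∀ q ∈ AddSubmonoid.closure (J : Set V), ψ q = 0 := fun q hq =>
    AddSubmonoid.closure_le (S := (LinearMap.ker ψ).toAddSubmonoid).2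
      (fun α hα => by simp [hψ α (hJ hα), hwJ α hα]) hq
  have hkerΔ : {x ∈ (Δ : Set V) | ψ x = 0} ⊆ J := fun α ⟨hα, hψα⟩ => by
    by_contra hαJ
    exact (hwpos α hαJ).ne' (hψ α hα ▸ hψα)
  have hψlam : 0 < ψ lam := by
    rwa [hlam, map_sum, Finset.sum_congr rfl fun α hα => by rw [map_smul, hψ α hα, smul_eq_mul]]
  refine isPosWeakFace_of_le_of_eq ψ hψlam (fun x hx => ?_) ?_ (fun x hx hxlam => ?_) _
  · obtain ⟨q, hq, rfl⟩ := hX hx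
    simpa using AddSubmonoid.map_nonneg_of_mem_closure_s17 ψ hψΔ hq
  · rintro y ⟨-, q, hq, rfl⟩
    simp [hψJ q hq]
  · obtain ⟨q, hq, rfl⟩ := hX hx
    refine ⟨hx, q, AddSubmonoid.closure_mono hkerΔ ?_, rfl⟩
    exact AddSubmonoid.mem_closure_sep_of_map_eq_zero ψ hψΔ hq (by simpa using hxlam)

/-- Suppose `λ = Σ_{α∈Δ} c_α α` with all `c_α ∈ 𝔸`, and some
`α₀ ∈ Δ ∖ J` has `c_{α₀} > 0`. Then for every `X ⊆ λ − ℤ₊Δ`, the subset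
`X ∩ (λ − ℤ₊J)` is a positive weak `𝔸`-face of `X`. -/
theorem statement17 {V : Type*} [AddCommGroup V] [Module ℝ V]
    (Δ : Finset V)
    (hind : LinearIndependent ℝ (fun x : (Δ : Set V) => (x : V)))
    (𝔸 : AddSubgroup ℝ) (h𝔸 : 𝔸 ≠ ⊥)
    (J : Finset V) (hJ : J ⊆ Δ)
    (c : V → ℝ) (hc : ∀ α ∈ Δ, c α ∈ 𝔸)
    (lam : V) (hlam : lam = ∑ α ∈ Δ, c α • α)
    (α₀ : V) (hα₀Δ : α₀ ∈ Δ) (hα₀J : α₀ ∉ J) (hc0 : 0 < c α₀)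
    (X : Set V)
    (hX : X ⊆ {x : V | ∃ q ∈ AddSubmonoid.closure (Δ : Set V), x = lam - q}) :
    IsPosWeakFace X
      (X ∩ {x : V | ∃ q ∈ AddSubmonoid.closure (J : Set V), x = lam - q})
      (𝔸 : Set ℝ) :=
  statement17_general Δ hind 𝔸 J hJ c lam hlam α₀ hα₀Δ hα₀J hc0 X hX
end
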